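/- arXiv:2404.13577 — 9 statements merged into one kernel-verified Lean document; each statement's English description precedes it below -/
import Mathlib

section
/- A binary word f is tilde-isometric if and only if its reverse f^rev is tilde-isometric. -/
/-- One tilde edit step: a single-bit replacement or a swap of two adjacent distinct symbols. -/
def tildeStep (u v : List Bool) : Prop :=
  (∃ i, i < u.length ∧ v = u.set i (!(u.getD i false))) ∨
  (∃ i, i + 1 < u.length ∧ u.getD i false ≠ u.getD (i+1) false ∧
    v = (u.set i (u.getD (i+1) false)).set (i+1) (u.getD i false))

/-- A chain of `d` tilde steps from `u` to `v`. -/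
def tildeChain : ℕ → List Bool → List Bool → Prop
  | 0, u, v => u = v
  | d+1, u, v => ∃ w, tildeStep u w ∧ tildeChain d w v

/-- The tilde-distance: minimum number of replacements and adjacent swaps. -/
noncomputable def tildeDist (u v : List Bool) : ℕ :=
  sInf {d | tildeChain d u v}

/-- `f` occurs as a contiguous factor of `w`. -/
def isFactor (f w : List Bool) : Prop := ∃ s t, w = s ++ f ++ t

/-- `w` is `f`-free. -/
def fFree (f w : List Bool) : Prop := ¬ isFactor f w

/-- A chain of `d` tilde steps from `u` to `v` all of whose intermediate words are `f`-free. -/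
def freeTildeChain (f : List Bool) : ℕ → List Bool → List Bool → Prop
  | 0, u, v => u = v
  | d+1, u, v => ∃ w, tildeStep u w ∧ fFree f w ∧ freeTildeChain f d w v

/-- `f` is tilde-isometric. -/
def tildeIsometric (f : List Bool) : Prop :=
  ∀ u v : List Bool, u.length = v.length → f.length ≤ u.length →
    fFree f u → fFree f v → freeTildeChain f (tildeDist u v) u v

/-- Replacement at (0-indexed) position `i`. -/
def repl (w : List Bool) (i : ℕ) : List Bool := w.set i (!(w.getD i false))

/-- Swap of positions `i` and `i+1` (0-indexed). -/
def swap (w : List Bool) (i : ℕ) : List Bool :=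
  (w.set i (w.getD (i+1) false)).set (i+1) (w.getD i false)

/-- Hamming distance between equal-length binary words. -/
def hammingDistL (u v : List Bool) : ℕ :=
  ((List.range u.length).filter (fun i => u.getD i false != v.getD i false)).length

/-- One Hamming edit step: a single-bit replacement. -/
def hammStep (u v : List Bool) : Prop :=
  ∃ i, i < u.length ∧ v = u.set i (!(u.getD i false))

/-- A chain of `d` Hamming steps from `u` to `v`, all intermediate words `f`-free. -/
def freeHammChain (f : List Bool) : ℕ → List Bool → List Bool → Prop
  | 0, u, v => u = v
  | d+1, u, v => ∃ w, hammStep u w ∧ fFree f w ∧ freeHammChain f d w v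

/-- `f` is Hamming-isometric. -/
def hammIsometric (f : List Bool) : Prop :=
  ∀ u v : List Bool, u.length = v.length → f.length ≤ u.length →
    fFree f u → fFree f v → freeHammChain f (hammingDistL u v) u v

/-!
Reversal sends a replacement at position `i` of a word `w` to a replacement at `|w| - 1 - i`, and
a swap at `i, i + 1` to a swap at `|w| - 2 - i, |w| - 1 - i`. Hence it maps tilde-transformations
to tilde-transformations of the same length and preserves the tilde-distance, while `w` is
`f`-free exactly when `w.reverse` is `f.reverse`-free. Reversing an `f`-free transformation from
`u.reverse` to `v.reverse` therefore gives an `f.reverse`-free one from `u` to `v`.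
-/

theorem List.reverse_set {α : Type*} (l : List α) (i : ℕ) (x : α) (h : i < l.length) :
    (l.set i x).reverse = l.reverse.set (l.length - 1 - i) x := by
  apply List.ext_getElem (by simp)
  intro j h₁ h₂
  simp only [List.length_reverse, List.length_set] at h₁ h₂
  rw [List.getElem_reverse, List.getElem_set, List.getElem_set, List.getElem_reverse]
  simp only [List.length_set]
  split <;> split <;> first | rfl | omega

theorem tildeStep.reverse {u v : List Bool} (h : tildeStep u v) :
    tildeStep u.reverse v.reverse := by
  rcases h with ⟨i, hi, rfl⟩ | ⟨i, hi, hne, rfl⟩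
  · refine Or.inl ⟨u.length - 1 - i, by simp; omega, ?_⟩
    rw [List.getD_reverse _ (by omega), show u.length - 1 - (u.length - 1 - i) = i by omega,
      List.reverse_set _ _ _ hi]
  · have hi₁ : u.length - 1 - (u.length - 2 - i) = i + 1 := by omega
    have hi₀ : u.length - 1 - (u.length - 2 - i + 1) = i := by omega
    refine Or.inr ⟨u.length - 2 - i, by simp; omega, ?_, ?_⟩
    · rw [List.getD_reverse _ (by omega), List.getD_reverse _ (by omega), hi₁, hi₀]
      exact hne.symm
    · rw [List.getD_reverse _ (by omega), List.getD_reverse _ (by omega), hi₁, hi₀,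
        List.reverse_set _ _ _ (by simp; omega), List.length_set, List.reverse_set _ _ _ (by omega),
        show u.length - 1 - (i + 1) = u.length - 2 - i by omega, List.set_comm _ _ (by omega),
        show u.length - 2 - i + 1 = u.length - 1 - i by omega]

theorem tildeChain.reverse {d : ℕ} {u v : List Bool} (h : tildeChain d u v) :
    tildeChain d u.reverse v.reverse := by
  induction d generalizing u with
  | zero => exact congrArg List.reverse h
  | succ d ih =>
    obtain ⟨w, hstep, hchain⟩ := h
    exact ⟨w.reverse, hstep.reverse, ih hchain⟩

theorem tildeDist_reverse (u v : List Bool) : tildeDist u.reverse v.reverse = tildeDist u v := by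
  refine congrArg sInf (Set.ext fun d => ⟨fun h => ?_, tildeChain.reverse⟩)
  simpa using h.reverse

theorem isFactor_iff_isInfix {f w : List Bool} : isFactor f w ↔ f <:+: w := by
  simp only [isFactor, List.IsInfix, eq_comm]

theorem fFree_reverse_iff {f w : List Bool} : fFree f.reverse w ↔ fFree f w.reverse := by
  rw [fFree, fFree, isFactor_iff_isInfix, isFactor_iff_isInfix, ← List.reverse_infix,
    List.reverse_reverse]

theorem freeTildeChain.reverse {f : List Bool} {d : ℕ} {u v : List Bool}
    (h : freeTildeChain f d u v) : freeTildeChain f.reverse d u.reverse v.reverse := by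
  induction d generalizing u with
  | zero => exact congrArg List.reverse h
  | succ d ih =>
    obtain ⟨w, hstep, hfree, hchain⟩ := h
    exact ⟨w.reverse, hstep.reverse, by rwa [fFree_reverse_iff, List.reverse_reverse],
      ih hchain⟩

theorem tildeIsometric.reverse {f : List Bool} (h : tildeIsometric f) :
    tildeIsometric f.reverse := by
  intro u v hlen hflen hu hv
  have hchain := h u.reverse v.reverse (by simp [hlen]) (by simpa using hflen)
    (fFree_reverse_iff.mp hu) (fFree_reverse_iff.mp hv)
  rw [tildeDist_reverse] at hchain
  simpa using hchain.reverse

theorem stmt3 (f : List Bool) :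
    tildeIsometric f ↔ tildeIsometric f.reverse :=
  ⟨tildeIsometric.reverse, fun h => by simpa using h.reverse⟩
end

section
/- The word f = 1010 is tilde-non-isometric: the pair (u,v) = (11000, 10110) consists of two f-free words with dist~(u,v) = 2, and every tilde-transformation from u to v of length 2 passes through a word containing 1010 as a factor. -/
instance exLTdec (n : ℕ) (P : ℕ → Prop) [DecidablePred P] : Decidable (∃ i, i < n ∧ P i) :=
  decidable_of_iff (∃ i ∈ List.range n, P i) (by simp [List.mem_range])

instance exLTdec' (n : ℕ) (P : ℕ → Prop) [DecidablePred P] : Decidable (∃ i, i + 1 < n ∧ P i) :=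
  decidable_of_iff (∃ i ∈ List.range n, i + 1 < n ∧ P i) (by
    constructor
    · rintro ⟨i, _, h⟩; exact ⟨i, h⟩
    · rintro ⟨i, h1, h2⟩; exact ⟨i, List.mem_range.2 (by omega), h1, h2⟩)

instance tildeStepDec (u v : List Bool) : Decidable (tildeStep u v) := by
  unfold tildeStep; exact inferInstance

instance isFactorDec (f w : List Bool) : Decidable (isFactor f w) :=
  decidable_of_iff (f <:+: w)
    ⟨fun ⟨s, t, h⟩ => ⟨s, t, h.symm⟩, fun ⟨s, t, h⟩ => ⟨s, t, h.symm⟩⟩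

instance fFreeDec (f w : List Bool) : Decidable (fFree f w) :=
  instDecidableNot

theorem stmt5 :
    fFree [true, false, true, false] [true, true, false, false, false] ∧ fFree [true, false, true, false] [true, false, true, true, false] ∧
    tildeDist [true, true, false, false, false] [true, false, true, true, false] = 2 ∧
    (∀ w : List Bool, tildeStep [true, true, false, false, false] w → tildeStep w [true, false, true, true, false] → isFactor [true, false, true, false] w) ∧
    ¬ tildeIsometric [true, false, true, false] := by
  have hfu : fFree [true, false, true, false] [true, true, false, false, false] := by decide
  have hfv : fFree [true, false, true, false] [true, false, true, true, false] := by decide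
  have hmem : tildeChain 2 [true, true, false, false, false] [true, false, true, true, false] :=
    ⟨[true, false, true, false, false], by decide,
      ⟨[true, false, true, true, false], by decide, rfl⟩⟩
  have hdist : tildeDist [true, true, false, false, false] [true, false, true, true, false] = 2 := by
    refine le_antisymm (Nat.sInf_le hmem) (le_csInf ⟨2, hmem⟩ ?_)
    intro d hd
    match d with
    | 0 =>
      simp only [Set.mem_setOf_eq, tildeChain] at hd
      exact absurd hd (by decide)
    | 1 =>
      simp only [Set.mem_setOf_eq, tildeChain] at hd
      obtain ⟨w, hs, he⟩ := hd
      subst he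
      exact absurd hs (by decide)
    | (n+2) => omega
  have hmid : ∀ w : List Bool, tildeStep [true, true, false, false, false] w →
      tildeStep w [true, false, true, true, false] → isFactor [true, false, true, false] w := by
    intro w h1 h2
    rcases h1 with ⟨i, hi, rfl⟩ | ⟨i, hi, _, rfl⟩ <;>
      norm_num at hi <;>
      [skip; (have hi' : i < 4 := by omega)] <;>
      interval_cases i <;>
      first
        | exact absurd h2 (by decide)
        | (revert h2; decide)
  refine ⟨hfu, hfv, hdist, hmid, ?_⟩
  intro h
  have hchain := h [true, true, false, false, false] [true, false, true, true, false] rfl (by decide) hfu hfv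
  rw [hdist] at hchain
  obtain ⟨w, hs1, hfw, w', hs2, _, he⟩ := hchain
  subst he
  exact hfw (hmid w hs1 hs2)
end

section
/- For n, m > 2, the word f = 1^n 0^m has exactly two 2-tilde-error overlaps: one of shift 2 (i.e., dist~(pre_{n+m-2}(f), suf_{n+m-2}(f)) = 2) and one of shift n+m−2 (i.e., dist~(pre_2(f), suf_2(f)) = dist~(11,00) = 2); for every other length ℓ with 1 ≤ ℓ ≤ n+m−1, dist~(pre_ℓ(f), suf_ℓ(f)) ≠ 2. -/
lemma count_set (l : List Bool) : ∀ i, i < l.length → ∀ b : Bool,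
    (l.set i b).count true + (if l.getD i false then 1 else 0)
      = l.count true + (if b then 1 else 0) := by
  induction l with
  | nil => intro i h; simp at h
  | cons a l ih =>
    intro i h b
    cases i with
    | zero =>
      show (b :: l).count true + _ = _
      simp only [List.count_cons, List.getD_cons_zero]
      cases a <;> cases b <;> simp
    | succ i =>
      show (a :: l.set i b).count true + (if l.getD i false then 1 else 0) = _
      have := ih i (by simpa using h) b
      simp only [List.count_cons]
      omega

lemma getD_lt (l : List Bool) (i : ℕ) (h : i < l.length) : l.getD i false = l[i] := by
  simp [List.getD_eq_getElem?_getD, List.getElem?_eq_getElem h]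

lemma length_set' (l : List Bool) (i : ℕ) (b : Bool) : (l.set i b).length = l.length := by simp

lemma step_count {u v : List Bool} (h : tildeStep u v) :
    u.count true ≤ v.count true + 1 ∧ v.count true ≤ u.count true + 1 := by
  rcases h with ⟨i, hi, rfl⟩ | ⟨i, hi, hne, rfl⟩
  · have := count_set u i hi (!(u.getD i false))
    cases hb : u.getD i false <;> rw [hb] at this <;> simp at this ⊢ <;> omega
  · have hi1 : i < u.length := by omega
    have h1 := count_set u i hi1 (u.getD (i+1) false)
    have h2 := count_set (u.set i (u.getD (i+1) false)) (i+1) (by simpa using hi) (u.getD i false)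
    have hg : (u.set i (u.getD (i+1) false)).getD (i+1) false = u.getD (i+1) false := by
      rw [getD_lt _ _ (by simpa using hi), List.getElem_set_ne (by omega)]
      exact (getD_lt _ _ hi).symm
    rw [hg] at h2
    omega

lemma chain_count {d : ℕ} : ∀ {u v : List Bool}, tildeChain d u v →
    u.count true ≤ v.count true + d ∧ v.count true ≤ u.count true + d := by
  induction d with
  | zero => intro u v h; cases h; simp
  | succ d ih =>
    intro u v h
    obtain ⟨w, hs, hc⟩ := h
    have h1 := step_count hs
    have h2 := ih hc
    omega

def wrd (a p : ℕ) : List Bool := List.replicate a true ++ List.replicate p false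

lemma count_wrd (a p : ℕ) : (wrd a p).count true = a := by
  simp [wrd, List.count_replicate]

lemma getD_append_len (l r : List Bool) (x : Bool) (i : ℕ) (h : i = l.length) :
    (l ++ x :: r).getD i false = x := by
  subst h
  induction l with
  | nil => rfl
  | cons c l ih => simpa using ih

lemma set_append_len (l r : List Bool) (x b : Bool) (i : ℕ) (h : i = l.length) :
    (l ++ x :: r).set i b = l ++ b :: r := by
  subst h
  induction l with
  | nil => rfl
  | cons c l ih => simpa using ih

lemma wrd_succ (a p : ℕ) : wrd (a+1) p = List.replicate a true ++ (true :: List.replicate p false) := by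
  simp [wrd, List.replicate_succ', List.append_assoc]

lemma step_wrd (a p : ℕ) : tildeStep (wrd (a+1) p) (wrd a (p+1)) := by
  left
  refine ⟨a, ?_, ?_⟩
  · simp [wrd]; omega
  · rw [wrd_succ, getD_append_len _ _ _ _ (by simp), set_append_len _ _ _ _ _ (by simp)]
    simp [wrd, List.replicate_succ]

lemma chain_wrd (k : ℕ) : ∀ a p, tildeChain k (wrd (a+k) p) (wrd a (p+k)) := by
  induction k with
  | zero => intro a p; rfl
  | succ k ih =>
    intro a p
    refine ⟨wrd (a+k) (p+1), step_wrd (a+k) p, ?_⟩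
    have := ih a (p+1)
    have e : p + 1 + k = p + (k+1) := by omega
    rwa [e] at this

lemma dist_wrd (b k p : ℕ) : tildeDist (wrd (b+k) p) (wrd b (p+k)) = k := by
  have hmem : tildeChain k (wrd (b+k) p) (wrd b (p+k)) := chain_wrd k b p
  apply le_antisymm
  · exact Nat.sInf_le hmem
  · have hne : {d | tildeChain d (wrd (b+k) p) (wrd b (p+k))}.Nonempty := ⟨k, hmem⟩
    have hs := Nat.sInf_mem hne
    have hc := chain_count hs
    have c1 := count_wrd (b+k) p
    have c2 := count_wrd b (p+k)
    simp only [Set.mem_setOf_eq] at hs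
    show k ≤ sInf {d | tildeChain d (wrd (b+k) p) (wrd b (p+k))}
    omega

lemma take_wrd (n m l : ℕ) (h2 : l ≤ n + m) :
    (List.replicate n true ++ List.replicate m false).take l = wrd (min l n) (l - min l n) := by
  rw [List.take_append]
  simp only [List.take_replicate, List.length_replicate, wrd]
  congr 1
  congr 1
  omega

lemma drop_wrd (n m l : ℕ) (h2 : l ≤ n + m) :
    (List.replicate n true ++ List.replicate m false).drop (n + m - l)
      = wrd (n - (n + m - l)) (l - (n - (n + m - l))) := by
  rw [List.drop_append]
  simp only [List.drop_replicate, List.length_replicate, wrd]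
  congr 1
  congr 1
  omega

lemma dist_take_drop (n m l : ℕ) (h2 : l ≤ n + m) :
    tildeDist ((List.replicate n true ++ List.replicate m false).take l)
      ((List.replicate n true ++ List.replicate m false).drop (n + m - l))
      = min l n - (n - (n + m - l)) := by
  rw [take_wrd n m l h2, drop_wrd n m l h2]
  set a := min l n with ha
  set b := n - (n + m - l) with hb
  have hba : b ≤ a := by omega
  have e1 : a = b + (a - b) := by omega
  have e2 : l - b = (l - a) + (a - b) := by omega
  rw [show wrd a (l - a) = wrd (b + (a - b)) (l - a) by rw [← e1],
    show wrd b (l - b) = wrd b ((l - a) + (a - b)) by rw [← e2],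
    dist_wrd b (a - b) (l - a)]

theorem stmt9 (n m : ℕ) (hn : 2 < n) (hm : 2 < m) :
    let f := List.replicate n true ++ List.replicate m false
    tildeDist (f.take (n + m - 2)) (f.drop 2) = 2 ∧
    tildeDist (f.take 2) (f.drop (n + m - 2)) = 2 ∧
    (∀ l : ℕ, 1 ≤ l → l ≤ n + m - 1 → l ≠ 2 → l ≠ n + m - 2 →
      tildeDist (f.take l) (f.drop (n + m - l)) ≠ 2) := by
  intro f
  refine ⟨?_, ?_, ?_⟩
  · have h := dist_take_drop n m (n + m - 2) (by omega)
    rw [show n + m - (n + m - 2) = 2 by omega] at h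
    rw [h]; omega
  · have h := dist_take_drop n m 2 (by omega)
    rw [h]; omega
  · intro l h1 h2 h3 h4
    have h := dist_take_drop n m l (by omega)
    rw [h]; omega
end

section
/- Any maximal-length tilde-transformation cannot contain three swaps at consecutive positions: if u is a binary word and S_i, S_{i+1}, S_{i+2} are applicable in succession (i.e., w_1 = S_i(u), w_2 = S_{i+1}(w_1), w_3 = S_{i+2}(w_2) are defined), then dist~(u, w_3) ≤ 2 < 3. -/
theorem stmt10 (u : List Bool) (i : ℕ) (h : i + 3 < u.length)
    (h1 : u.getD i false ≠ u.getD (i+1) false)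
    (h2 : (swap u i).getD (i+1) false ≠ (swap u i).getD (i+2) false)
    (h3 : (swap (swap u i) (i+1)).getD (i+2) false ≠ (swap (swap u i) (i+1)).getD (i+3) false) :
    tildeDist u (swap (swap (swap u i) (i+1)) (i+2)) ≤ 2 := by
  have hi : i < u.length := by omega
  have hi1 : i + 1 < u.length := by omega
  have hi2 : i + 2 < u.length := by omega
  have hi3 : i + 3 < u.length := by omega
  set a := u.getD i false with ha
  have ha' : u[i]?.getD false = a := by rw [← List.getD_eq_getElem?_getD]
  have e2 : (swap u i).getD (i+1) false = a := by
    simp [swap, List.getD_eq_getElem?_getD, List.getElem?_set, hi1, ha']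
  have e2' : (swap u i).getD (i+2) false = u.getD (i+2) false := by
    simp [swap, List.getD_eq_getElem?_getD, List.getElem?_set, hi2]
  have e3 : (swap (swap u i) (i+1)).getD (i+2) false = a := by
    simp [swap, List.getD_eq_getElem?_getD, List.getElem?_set, hi1, hi2, ha']
  have e3' : (swap (swap u i) (i+1)).getD (i+3) false = u.getD (i+3) false := by
    simp [swap, List.getD_eq_getElem?_getD, List.getElem?_set, hi3]
  have hb : u.getD (i+1) false = !a := by
    rcases Bool.eq_false_or_eq_true (u.getD (i+1) false) with hh | hh <;>
      rcases Bool.eq_false_or_eq_true a with hh' | hh' <;> simp_all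
  have hc : u.getD (i+2) false = !a := by
    rw [e2, e2'] at h2
    rcases Bool.eq_false_or_eq_true (u.getD (i+2) false) with hh | hh <;>
      rcases Bool.eq_false_or_eq_true a with hh' | hh' <;> simp_all
  have hd : u.getD (i+3) false = !a := by
    rw [e3, e3'] at h3
    rcases Bool.eq_false_or_eq_true (u.getD (i+3) false) with hh | hh <;>
      rcases Bool.eq_false_or_eq_true a with hh' | hh' <;> simp_all
  have gb : u[i+1]'hi1 = !a := by rw [← List.getD_eq_getElem u false hi1]; exact hb
  have gc : u[i+2]'hi2 = !a := by rw [← List.getD_eq_getElem u false hi2]; exact hc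
  -- explicit forms of the swaps
  have sw1 : swap u i = (u.set i (!a)).set (i+1) a := by rw [swap, hb, ← ha]
  have gd : u[i+3]'hi3 = !a := by rw [← List.getD_eq_getElem u false hi3]; exact hd
  have sw2 : swap (swap u i) (i+1)
      = ((swap u i).set (i+1) (!a)).set (i+2) a := by
    rw [swap, e2', hc, e2]
  have sw3 : swap (swap (swap u i) (i+1)) (i+2)
      = ((swap (swap u i) (i+1)).set (i+2) (!a)).set (i+3) a := by
    rw [swap, e3', hd, e3]
  set w1 : List Bool := u.set i (!a) with hw1
  have hgd : w1.getD (i+3) false = !a := by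
    rw [hw1, List.getD_eq_getElem?_getD, List.getElem?_set]
    simp [show ¬ i = i + 3 by omega, List.getElem?_eq_getElem hi3, gd]
  have key : swap (swap (swap u i) (i+1)) (i+2) = w1.set (i+3) (!(w1.getD (i+3) false)) := by
    rw [hgd, sw3, sw2, sw1, hw1]
    apply List.ext_getElem
    · simp
    · intro n hn hn'
      simp only [List.getElem_set]
      split_ifs <;> (try omega) <;> (try rfl) <;>
        first
        | (simp_all; omega)
        | (subst_vars; simp_all)
  have hchain : tildeChain 2 u (swap (swap (swap u i) (i+1)) (i+2)) := by
    refine ⟨w1, Or.inl ⟨i, hi, by rw [hw1, ha]⟩,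
      ⟨w1.set (i+3) (!(w1.getD (i+3) false)), Or.inl ⟨i+3, by simp [hw1]; omega, rfl⟩, ?_⟩⟩
    simp [tildeChain, key]
  exact Nat.sInf_le hchain
end

section
/- If a binary word f of length n has a 1-tilde-error overlap of shift r with a swap error, i.e., suf_{n-r}(f) = S_i(pre_{n-r}(f)) for some position i with pre_{n-r}(f)[i] = 0 and pre_{n-r}(f)[i+1] = 1, then f is tilde-non-isometric; in particular (u,v) = (pre_r(f)·R_i(f), pre_r(f)·R_{i+1}(f)) is a pair of tilde-witnesses: u and v are f-free, dist~(u,v) = 2, and no tilde-transformation of length 2 from u to v keeps all intermediate words f-free. -/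
/-!
The words `u = pre_r(f)·R_i(f)` and `v = pre_r(f)·R_{i+1}(f)` differ exactly at the adjacent
positions `r+i, r+i+1`, where `u` reads `11` and `v` reads `00`. Equal letters cannot be swapped, so
`dist~(u,v) = 2`, and a transformation of length 2 must replace these two letters one at a time,
passing through `pre_r(f)·f` or `pre_r(f)·S_i(f)`. Both contain `f`; the second because, by the
overlap, `S_i(f)` begins with `suf_{n-r}(f)`. That `u` and `v` themselves are `f`-free is checked
by comparing a hypothetical occurrence of `f` with the overlap at a few positions.
-/

section Words

variable {w : List Bool}

theorem eq_of_getD_eq {u : List Bool} (hlen : w.length = u.length)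
    (h : ∀ k, w.getD k false = u.getD k false) : w = u :=
  List.ext_getElem hlen fun k hw hu => by
    rw [← List.getD_eq_getElem _ false hw, ← List.getD_eq_getElem _ false hu, h k]

theorem getD_take_of_lt {m k : ℕ} (hk : k < m) : (w.take m).getD k false = w.getD k false := by
  simp [List.getD_eq_getElem?_getD, hk]

theorem getD_drop (m k : ℕ) : (w.drop m).getD k false = w.getD (m + k) false := by
  simp [List.getD_eq_getElem?_getD]

theorem length_repl (w : List Bool) (j : ℕ) : (repl w j).length = w.length := by
  simp [repl]

theorem length_swap (w : List Bool) (i : ℕ) : (swap w i).length = w.length := by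
  simp [swap]

theorem getD_repl {j : ℕ} (hj : j < w.length) (k : ℕ) :
    (repl w j).getD k false = if k = j then !w.getD j false else w.getD k false := by
  unfold repl
  by_cases hk : k = j
  · subst hk; simp [List.getD_eq_getElem?_getD, hj]
  · simp [List.getD_eq_getElem?_getD, hk, Ne.symm hk]

theorem getD_swap {i : ℕ} (hi : i + 1 < w.length) (k : ℕ) :
    (swap w i).getD k false = if k = i then w.getD (i + 1) false
      else if k = i + 1 then w.getD i false else w.getD k false := by
  unfold swap
  simp only [List.getD_eq_getElem?_getD, List.getElem?_set, List.length_set]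
  by_cases h1 : k = i + 1
  · simp [h1, hi]
  · by_cases h0 : k = i
    · simp [h0, show i < w.length by omega]
    · simp [Ne.symm h0, Ne.symm h1, h0, h1]

theorem repl_repl_self (w : List Bool) (j : ℕ) : repl (repl w j) j = w := by
  rcases lt_or_ge j w.length with hj | hj
  · refine eq_of_getD_eq (by simp [length_repl]) fun k => ?_
    rw [getD_repl (by rwa [length_repl]), getD_repl hj, getD_repl hj]
    by_cases hk : k = j <;> simp [hk]
  · simp [repl, List.set_eq_of_length_le hj]

theorem swap_eq_repl_repl {i : ℕ} (hi : i + 1 < w.length)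
    (hne : w.getD i false ≠ w.getD (i + 1) false) : swap w i = repl (repl w i) (i + 1) := by
  refine eq_of_getD_eq (by simp [length_swap, length_repl]) fun k => ?_
  rw [getD_swap hi, getD_repl (by rw [length_repl]; exact hi), getD_repl (by omega),
    getD_repl (by omega)]
  revert hne
  cases w.getD i false <;> cases w.getD (i + 1) false <;> split_ifs <;> simp_all

theorem getD_take_append_of_lt {f l : List Bool} {r k : ℕ} (hr : r ≤ f.length) (hk : k < r) :
    (f.take r ++ l).getD k false = f.getD k false := by
  rw [List.getD_append _ _ _ _ (by simp; omega), getD_take_of_lt hk]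

theorem getD_take_append_add {f l : List Bool} {r : ℕ} (hr : r ≤ f.length) (k : ℕ) :
    (f.take r ++ l).getD (r + k) false = l.getD k false := by
  rw [List.getD_append_right _ _ _ _ (by simp), List.length_take_of_le hr, Nat.add_sub_cancel_left]

theorem repl_take_append_add {f l : List Bool} {r : ℕ} (hr : r ≤ f.length) (j : ℕ) :
    repl (f.take r ++ l) (r + j) = f.take r ++ repl l j := by
  unfold repl
  rw [List.set_append_right _ _ (by simp), getD_take_append_add hr, List.length_take_of_le hr,
    Nat.add_sub_cancel_left]

theorem take_append_repl_succ {f : List Bool} {r : ℕ} (hr : r ≤ f.length) (i : ℕ) :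
    f.take r ++ repl f (i + 1) = repl (repl (f.take r ++ repl f i) (r + i)) (r + i + 1) := by
  rw [repl_take_append_add hr, repl_repl_self, add_assoc, repl_take_append_add hr]

end Words

theorem isFactor_iff_getD {f w : List Bool} :
    isFactor f w ↔ ∃ s, s + f.length ≤ w.length ∧
      ∀ j < f.length, w.getD (s + j) false = f.getD j false := by
  constructor
  · rintro ⟨a, b, rfl⟩
    refine ⟨a.length, by simp, fun j hj => ?_⟩
    rw [List.append_assoc, List.getD_append_right _ _ _ _ (by omega), Nat.add_sub_cancel_left,
      List.getD_append _ _ _ _ hj]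
  · rintro ⟨s, hs, hocc⟩
    have hmid : (w.drop s).take f.length = f :=
      eq_of_getD_eq (by simp; omega) fun j => by
        rcases lt_or_ge j f.length with hj | hj
        · rw [getD_take_of_lt hj, getD_drop, hocc j hj]
        · simp [List.getD_eq_getElem?_getD, hj]
    refine ⟨w.take s, (w.drop s).drop f.length, ?_⟩
    conv_lhs => rw [← List.take_append_drop s w, ← List.take_append_drop f.length (w.drop s)]
    rw [hmid, List.append_assoc]

section TildeSteps

variable {u w : List Bool}

theorem tildeStep.exists_flip (h : tildeStep u w) :
    w.length = u.length ∧ ∃ p q, (q = p ∨ q = p + 1 ∧ u.getD p false ≠ u.getD q false) ∧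
      q < u.length ∧ ∀ k, (w.getD k false ≠ u.getD k false ↔ k = p ∨ k = q) := by
  rcases h with ⟨p, hp, rfl⟩ | ⟨p, hp, hne, rfl⟩
  · refine ⟨length_repl u p, p, p, Or.inl rfl, hp, fun k => ?_⟩
    change (repl u p).getD k false ≠ _ ↔ _
    rw [getD_repl hp]
    by_cases hk : k = p <;> simp [hk]
  · refine ⟨length_swap u p, p, p + 1, Or.inr ⟨rfl, hne⟩, hp, fun k => ?_⟩
    change (swap u p).getD k false ≠ _ ↔ _
    rw [getD_swap hp]
    split_ifs with h0 h1
    · simpa [h0] using hne.symm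
    · simpa [h1] using hne
    · simpa using ⟨h0, h1⟩

theorem eq_repl_of_getD_ne_iff {p : ℕ} (hlen : w.length = u.length) (hp : p < u.length)
    (h : ∀ k, w.getD k false ≠ u.getD k false ↔ k = p) : w = repl u p :=
  eq_of_getD_eq (by rw [hlen, length_repl]) fun k => by
    rw [getD_repl hp]
    split_ifs with hkp
    · have hk := (h k).2 hkp
      subst hkp
      revert hk
      cases w.getD k false <;> cases u.getD k false <;> decide
    · exact not_not.1 fun hne => hkp ((h k).1 hne)

variable {a : ℕ}

theorem getD_repl_repl_ne_iff (ha : a + 1 < u.length) (k : ℕ) :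
    (repl (repl u a) (a + 1)).getD k false ≠ u.getD k false ↔ k = a ∨ k = a + 1 := by
  rw [getD_repl (by rwa [length_repl]), getD_repl (by omega), getD_repl (by omega)]
  by_cases h0 : k = a
  · simp [h0]
  · by_cases h1 : k = a + 1 <;> simp [h0, h1]

theorem eq_repl_of_tildeStep_of_tildeStep (ha : a + 1 < u.length) (h₁ : tildeStep u w)
    (h₂ : tildeStep w (repl (repl u a) (a + 1))) : w = repl u a ∨ w = repl u (a + 1) := by
  obtain ⟨hlen₁, p₁, q₁, hq₁, hq₁u, hflip₁⟩ := h₁.exists_flip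
  obtain ⟨-, p₂, q₂, hq₂, -, hflip₂⟩ := h₂.exists_flip
  have key : ∀ k, (k = a ∨ k = a + 1) ↔ ¬((k = p₁ ∨ k = q₁) ↔ (k = p₂ ∨ k = q₂)) := by
    intro k
    have hxor : ∀ x y z : Bool, (z ≠ x ↔ ¬(y ≠ x ↔ z ≠ y)) := by decide
    rw [← getD_repl_repl_ne_iff ha, ← hflip₁, ← hflip₂]
    exact hxor _ _ _
  -- the symmetric difference of the two flipped sets is `{a, a+1}`, forcing two replacements
  have hp : q₁ = p₁ ∧ (p₁ = a ∨ p₁ = a + 1) := by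
    rcases hq₁ with h₁ | ⟨h₁, -⟩ <;> rcases hq₂ with h₂ | ⟨h₂, -⟩ <;> subst q₁ q₂ <;>
    · have := key a; have := key (a + 1); have := key p₁; have := key (p₁ + 1)
      have := key p₂; have := key (p₂ + 1)
      omega
  obtain ⟨rfl, hp₁⟩ := hp
  have hw := eq_repl_of_getD_ne_iff hlen₁ hq₁u fun k => (hflip₁ k).trans or_self_iff
  rcases hp₁ with rfl | rfl
  exacts [Or.inl hw, Or.inr hw]

theorem tildeDist_repl_repl (ha : a + 1 < u.length)
    (heq : u.getD a false = u.getD (a + 1) false) : tildeDist u (repl (repl u a) (a + 1)) = 2 := by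
  have two : tildeChain 2 u (repl (repl u a) (a + 1)) :=
    ⟨repl u a, Or.inl ⟨a, by omega, rfl⟩, _, Or.inl ⟨a + 1, by rwa [length_repl], rfl⟩, rfl⟩
  have not_zero : ¬tildeChain 0 u (repl (repl u a) (a + 1)) := fun h =>
    absurd (getD_repl_repl_ne_iff ha a) (by simp [tildeChain] at h; simp [← h])
  have not_one : ¬tildeChain 1 u (repl (repl u a) (a + 1)) := by
    rintro ⟨w, hstep, rfl⟩
    obtain ⟨-, p, q, hq, -, hflip⟩ := hstep.exists_flip
    have hpq := fun k => (getD_repl_repl_ne_iff ha k).symm.trans (hflip k)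
    have := hpq a; have := hpq (a + 1); have := hpq p; have := hpq q
    rcases hq with rfl | ⟨rfl, hne⟩
    · omega
    · obtain rfl : p = a := by omega
      exact hne heq
  refine le_antisymm (Nat.sInf_le two) (le_csInf ⟨2, two⟩ fun d hd => ?_)
  rcases d with _ | _ | d
  exacts [absurd hd not_zero, absurd hd not_one, by omega]

end TildeSteps

theorem not_tildeIsometric_of_tildeDist_eq_two {f u v : List Bool}
    (hlen : u.length = v.length) (hf : f.length ≤ u.length) (hu : fFree f u) (hv : fFree f v)
    (hdist : tildeDist u v = 2) (hmid : ∀ w, tildeStep u w → tildeStep w v → isFactor f w) :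
    ¬tildeIsometric f := fun hiso => by
  have h := hiso u v hlen hf hu hv
  rw [hdist] at h
  obtain ⟨w, hstep, hw, _, hstep', -, rfl⟩ := h
  exact hw (hmid w hstep hstep')

/-- The overlap `suf_{|f|-r}(f) = S_i(pre_{|f|-r}(f))` with `f[i] = 0`, `f[i+1] = 1`, stated
pointwise and with `S_i` applied to all of `f` (which leaves the first `|f| - r` letters as
`S_i(pre_{|f|-r}(f))`). -/
structure SwapOverlap (f : List Bool) (r i : ℕ) : Prop where
  lt_length : r + (i + 1) < f.length
  getD_self : f.getD i false = false
  getD_succ : f.getD (i + 1) false = true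
  getD_add : ∀ k, r + k < f.length → f.getD (r + k) false = (swap f i).getD k false

namespace SwapOverlap

variable {f : List Bool} {r i : ℕ}

theorem of_drop_eq_swap (hi : i + 1 < f.length - r)
    (h0 : (f.take (f.length - r)).getD i false = false)
    (h1 : (f.take (f.length - r)).getD (i + 1) false = true)
    (hov : f.drop r = swap (f.take (f.length - r)) i) : SwapOverlap f r i := by
  rw [getD_take_of_lt (by omega)] at h0 h1
  refine ⟨by omega, h0, h1, fun k hk => ?_⟩
  have hlen : i + 1 < (f.take (f.length - r)).length := by simp; omega
  rw [← getD_drop, hov, getD_swap hlen, getD_swap (by omega), getD_take_of_lt (by omega),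
    getD_take_of_lt (by omega), getD_take_of_lt (by omega)]

theorem getD_add_self (h : SwapOverlap f r i) : f.getD (r + i) false = true := by
  rw [h.getD_add i (by have := h.lt_length; omega), getD_swap (by have := h.lt_length; omega),
    if_pos rfl, h.getD_succ]

theorem getD_add_succ (h : SwapOverlap f r i) : f.getD (r + (i + 1)) false = false := by
  rw [h.getD_add _ h.lt_length, getD_swap (by have := h.lt_length; omega), if_neg (by omega),
    if_pos rfl, h.getD_self]

theorem getD_add_of_ne (h : SwapOverlap f r i) {k : ℕ} (hk : r + k < f.length) (hki : k ≠ i)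
    (hki' : k ≠ i + 1) : f.getD (r + k) false = f.getD k false := by
  rw [h.getD_add k hk, getD_swap (by have := h.lt_length; omega), if_neg hki, if_neg hki']

theorem fFree_take_append_repl (h : SwapOverlap f r i) : fFree f (f.take r ++ repl f i) := by
  have hlt := h.lt_length
  have hU : ∀ k ≠ i, (f.take r ++ repl f i).getD (r + k) false = f.getD k false := fun k hk => by
    rw [getD_take_append_add (by omega), getD_repl (by omega), if_neg hk]
  rintro hfac
  obtain ⟨s, hs, hocc⟩ := isFactor_iff_getD.1 hfac
  simp only [List.length_append, List.length_take_of_le (show r ≤ f.length by omega),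
    length_repl] at hs
  rcases Nat.eq_or_lt_of_le (show s ≤ r by omega) with rfl | hsr
  · have := hocc i (by omega)
    rw [getD_take_append_add (by omega), getD_repl (by omega), if_pos rfl, h.getD_self] at this
    simp at this
  have e1 : f.getD (s + (i + 1)) false = false := by
    have := hocc (r + (i + 1)) hlt
    rw [show s + (r + (i + 1)) = r + (s + (i + 1)) by omega, hU _ (by omega)] at this
    rw [this, h.getD_add_succ]
  obtain rfl | hs0 := Nat.eq_zero_or_pos s
  · rw [zero_add, h.getD_succ] at e1
    simp at e1
  have e2 : f.getD (s + i) false = true := by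
    have := hocc (r + i) (by omega)
    rw [show s + (r + i) = r + (s + i) by omega, hU _ (by omega)] at this
    rw [this, h.getD_add_self]
  have e3 := (hocc i (by omega)).trans h.getD_self
  by_cases hsi : s + i < r
  · rw [getD_take_append_of_lt (by omega) hsi, e2] at e3
    simp at e3
  · obtain ⟨k, hk⟩ : ∃ k, s + i = r + k := ⟨s + i - r, by omega⟩
    rw [hk, hU _ (by omega)] at e3
    rw [hk, h.getD_add_of_ne (by omega) (by omega) (by omega), e3] at e2
    simp at e2

theorem fFree_take_append_repl_succ (h : SwapOverlap f r i) :
    fFree f (f.take r ++ repl f (i + 1)) := by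
  have hlt := h.lt_length
  have hV : ∀ k ≠ i + 1, (f.take r ++ repl f (i + 1)).getD (r + k) false = f.getD k false :=
    fun k hk => by rw [getD_take_append_add (by omega), getD_repl (by omega), if_neg hk]
  rintro hfac
  obtain ⟨s, hs, hocc⟩ := isFactor_iff_getD.1 hfac
  simp only [List.length_append, List.length_take_of_le (show r ≤ f.length by omega),
    length_repl] at hs
  rcases Nat.eq_or_lt_of_le (show s ≤ r by omega) with rfl | hsr
  · have := hocc (i + 1) (by omega)
    rw [getD_take_append_add (by omega), getD_repl (by omega), if_pos rfl, h.getD_succ] at this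
    simp at this
  obtain rfl | hs0 := Nat.eq_zero_or_pos s
  · have := hocc (r + i) (by omega)
    rw [zero_add, hV _ (by omega), h.getD_self, h.getD_add_self] at this
    simp at this
  have e1 : f.getD (s + (i + 1)) false = false := by
    have := hocc (r + (i + 1)) hlt
    rw [show s + (r + (i + 1)) = r + (s + (i + 1)) by omega, hV _ (by omega)] at this
    rw [this, h.getD_add_succ]
  have e3 := (hocc (i + 1) (by omega)).trans h.getD_succ
  by_cases hsi : s + (i + 1) < r
  · rw [getD_take_append_of_lt (by omega) hsi, e1] at e3
    simp at e3
  · obtain ⟨k, hk⟩ : ∃ k, s + (i + 1) = r + k := ⟨s + (i + 1) - r, by omega⟩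
    rcases Nat.lt_or_ge k i with hki | hki
    · rw [hk, hV _ (by omega)] at e3
      rw [hk, h.getD_add_of_ne (by omega) (by omega) (by omega), e3] at e1
      simp at e1
    · rw [hk, show k = i by omega, h.getD_add_self] at e1
      simp at e1

theorem isFactor_take_append_swap (h : SwapOverlap f r i) : isFactor f (f.take r ++ swap f i) := by
  have hr : r ≤ f.length := by have := h.lt_length; omega
  refine isFactor_iff_getD.2 ⟨0, by simp [length_swap], fun j hj => ?_⟩
  rw [zero_add]
  rcases Nat.lt_or_ge j r with hjr | hjr
  · exact getD_take_append_of_lt hr hjr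
  · obtain ⟨k, rfl⟩ : ∃ k, j = r + k := ⟨j - r, by omega⟩
    rw [getD_take_append_add hr, h.getD_add k hj]

theorem tildeDist_take_append_repl (h : SwapOverlap f r i) :
    tildeDist (f.take r ++ repl f i) (f.take r ++ repl f (i + 1)) = 2 := by
  have hlt := h.lt_length
  have hr : r ≤ f.length := by omega
  rw [take_append_repl_succ hr]
  refine tildeDist_repl_repl (by simp [length_repl]; omega) ?_
  rw [getD_take_append_add hr, add_assoc, getD_take_append_add hr, getD_repl (by omega),
    getD_repl (by omega), if_pos rfl, if_neg (by omega), h.getD_self, h.getD_succ, Bool.not_false]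

theorem isFactor_of_tildeStep_of_tildeStep (h : SwapOverlap f r i) (w : List Bool)
    (h₁ : tildeStep (f.take r ++ repl f i) w) (h₂ : tildeStep w (f.take r ++ repl f (i + 1))) :
    isFactor f w := by
  have hlt := h.lt_length
  have hr : r ≤ f.length := by omega
  rw [take_append_repl_succ hr] at h₂
  rcases eq_repl_of_tildeStep_of_tildeStep (by simp [length_repl]; omega) h₁ h₂ with rfl | rfl
  · rw [repl_take_append_add hr, repl_repl_self]
    exact ⟨f.take r, [], by simp⟩
  · rw [add_assoc, repl_take_append_add hr, ← swap_eq_repl_repl (by omega)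
      (by rw [h.getD_self, h.getD_succ]; decide)]
    exact h.isFactor_take_append_swap

end SwapOverlap

theorem stmt11_general (f : List Bool) (n r i : ℕ) (hn : f.length = n)
    (hi : i + 1 < n - r)
    (h0 : (f.take (n - r)).getD i false = false)
    (h1 : (f.take (n - r)).getD (i+1) false = true)
    (hov : f.drop r = swap (f.take (n - r)) i) :
    fFree f (f.take r ++ repl f i) ∧ fFree f (f.take r ++ repl f (i+1)) ∧
    tildeDist (f.take r ++ repl f i) (f.take r ++ repl f (i+1)) = 2 ∧
    (∀ w : List Bool, tildeStep (f.take r ++ repl f i) w →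
        tildeStep w (f.take r ++ repl f (i+1)) → isFactor f w) ∧
    ¬ tildeIsometric f := by
  subst hn
  have h := SwapOverlap.of_drop_eq_swap hi h0 h1 hov
  have hmid := h.isFactor_of_tildeStep_of_tildeStep
  exact ⟨h.fFree_take_append_repl, h.fFree_take_append_repl_succ, h.tildeDist_take_append_repl,
    hmid, not_tildeIsometric_of_tildeDist_eq_two (by simp [length_repl]) (by simp [length_repl])
      h.fFree_take_append_repl h.fFree_take_append_repl_succ h.tildeDist_take_append_repl hmid⟩

theorem stmt11 (f : List Bool) (n r i : ℕ) (hn : f.length = n)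
    (hr0 : 0 < r) (hrn : r < n) (hi : i + 1 < n - r)
    (h0 : (f.take (n - r)).getD i false = false)
    (h1 : (f.take (n - r)).getD (i+1) false = true)
    (hov : f.drop r = swap (f.take (n - r)) i) :
    fFree f (f.take r ++ repl f i) ∧ fFree f (f.take r ++ repl f (i+1)) ∧
    tildeDist (f.take r ++ repl f i) (f.take r ++ repl f (i+1)) = 2 ∧
    (∀ w : List Bool, tildeStep (f.take r ++ repl f i) w →
        tildeStep w (f.take r ++ repl f (i+1)) → isFactor f w) ∧
    ¬ tildeIsometric f :=
  stmt11_general f n r i hn hi h0 h1 hov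
end

section
/- The word f = 101 is tilde-non-isometric: the words u = 1001 and v = 1111 are 101-free, dist~(u,v) = 2, and every length-2 tilde-transformation from u to v has an intermediate word containing 101 as a factor. -/
instance instDecIsFactor (f w : List Bool) : Decidable (isFactor f w) :=
  decidable_of_iff (f <:+: w) (by
    constructor
    · rintro ⟨s, t, h⟩; exact ⟨s, t, h.symm⟩
    · rintro ⟨s, t, h⟩; exact ⟨s, t, h.symm⟩)

instance instDecTildeStep (u v : List Bool) : Decidable (tildeStep u v) := by
  unfold tildeStep
  refine @instDecidableOr _ _ inferInstance (decidable_of_iff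
    (∃ i < u.length, i + 1 < u.length ∧ u.getD i false ≠ u.getD (i+1) false ∧
      v = (u.set i (u.getD (i+1) false)).set (i+1) (u.getD i false)) ?_)
  constructor
  · rintro ⟨i, _, h⟩; exact ⟨i, h⟩
  · rintro ⟨i, h⟩; exact ⟨i, Nat.lt_of_succ_lt h.1, h⟩

instance instDecFFree (f w : List Bool) : Decidable (fFree f w) := by
  unfold fFree; infer_instance

lemma key : ∀ w : List Bool, tildeStep [true, false, false, true] w →
    tildeStep w [true, true, true, true] → isFactor [true, false, true] w := by
  rintro w (⟨i, hi, rfl⟩ | ⟨i, hi, hne, rfl⟩)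
  · have hi4 : i < 4 := by simpa using hi
    clear hi
    interval_cases i <;> decide
  · have hi3 : i < 3 := by have := hi; simp only [List.length_cons, List.length_nil] at this; omega
    clear hi
    interval_cases i <;> decide

lemma hchain2 : tildeChain 2 [true, false, false, true] [true, true, true, true] :=
  ⟨[true, true, false, true], by decide,
    ⟨[true, true, true, true], by decide, rfl⟩⟩

lemma hdist : tildeDist [true, false, false, true] [true, true, true, true] = 2 := by
  have hleast : IsLeast {d | tildeChain d [true, false, false, true] [true, true, true, true]} 2 := by
    constructor
    · exact hchain2
    · intro d hd
      match d, hd with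
      | 0, hd =>
        exact absurd (show ([true, false, false, true] : List Bool) = [true, true, true, true] from hd)
          (by decide)
      | 1, hd =>
        obtain ⟨w, hs, h0⟩ := hd
        have : w = [true, true, true, true] := h0
        subst this
        exact absurd hs (by decide)
      | (n+2), _ => omega
  exact hleast.csInf_eq

theorem stmt12 :
    fFree [true, false, true] [true, false, false, true] ∧ fFree [true, false, true] [true, true, true, true] ∧
    tildeDist [true, false, false, true] [true, true, true, true] = 2 ∧
    (∀ w : List Bool, tildeStep [true, false, false, true] w → tildeStep w [true, true, true, true] → isFactor [true, false, true] w) ∧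
    ¬ tildeIsometric [true, false, true] := by
  refine ⟨by decide, by decide, hdist, key, ?_⟩
  intro hI
  have h := hI [true, false, false, true] [true, true, true, true] rfl (by norm_num)
    (by decide) (by decide)
  rw [hdist] at h
  obtain ⟨w, hs, hfw, hc⟩ := h
  obtain ⟨w2, hs2, _, h0⟩ := hc
  have : w2 = [true, true, true, true] := h0
  subst this
  exact hfw (key w hs hs2)
end

section
/- The word f = 1100 is tilde-non-isometric: the words u = 110100 and v = 101010 are 1100-free, dist~(u,v) = 2, and every length-2 tilde-transformation from u to v passes through a word containing 1100 as a factor. -/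
/-- auxiliary: isFactor equals IsInfix -/
lemma isFactor_iff_infix (f w : List Bool) : isFactor f w ↔ f <:+: w := by
  constructor
  · rintro ⟨s, t, h⟩; exact ⟨s, t, h.symm⟩
  · rintro ⟨s, t, h⟩; exact ⟨s, t, h.symm⟩

/-- all words reachable from u in one tilde step -/
def stepList (u : List Bool) : List (List Bool) :=
  ((List.range u.length).map (repl u)) ++
  (((List.range u.length).filter
      (fun i => decide (i + 1 < u.length) && (u.getD i false != u.getD (i+1) false))).map (swap u))

lemma tildeStep_iff_mem (u v : List Bool) : tildeStep u v ↔ v ∈ stepList u := by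
  unfold tildeStep stepList repl swap
  simp only [List.mem_append, List.mem_map, List.mem_range, List.mem_filter,
    Bool.and_eq_true, decide_eq_true_eq, bne_iff_ne]
  constructor
  · rintro (⟨i, hi, hv⟩ | ⟨i, hi, hne, hv⟩)
    · exact Or.inl ⟨i, hi, hv.symm⟩
    · exact Or.inr ⟨i, ⟨Nat.lt_of_succ_lt hi, hi, hne⟩, hv.symm⟩
  · rintro (⟨i, hi, hv⟩ | ⟨i, ⟨_, hi, hne⟩, hv⟩)
    · exact Or.inl ⟨i, hi, hv.symm⟩
    · exact Or.inr ⟨i, hi, hne, hv.symm⟩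

theorem stmt13 :
    fFree [true, true, false, false] [true, true, false, true, false, false] ∧ fFree [true, true, false, false] [true, false, true, false, true, false] ∧
    tildeDist [true, true, false, true, false, false] [true, false, true, false, true, false] = 2 ∧
    (∀ w : List Bool, tildeStep [true, true, false, true, false, false] w → tildeStep w [true, false, true, false, true, false] → isFactor [true, true, false, false] w) ∧
    ¬ tildeIsometric [true, true, false, false] := by
  set f : List Bool := [true, true, false, false] with hf
  set u : List Bool := [true, true, false, true, false, false] with hu
  set v : List Bool := [true, false, true, false, true, false] with hv
  have hfreeU : fFree f u := by
    intro h; rw [isFactor_iff_infix] at h; revert h; decide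
  have hfreeV : fFree f v := by
    intro h; rw [isFactor_iff_infix] at h; revert h; decide
  have key : ∀ w : List Bool, tildeStep u w → tildeStep w v → isFactor f w := by
    intro w h1 h2
    rw [tildeStep_iff_mem] at h1 h2
    have h1' : w ∈ stepList u := h1
    rw [show stepList u = [[false, true, false, true, false, false],
      [true, false, false, true, false, false], [true, true, true, true, false, false],
      [true, true, false, false, false, false], [true, true, false, true, true, false],
      [true, true, false, true, false, true], [true, false, true, true, false, false],
      [true, true, true, false, false, false], [true, true, false, false, true, false]] from by decide] at h1'
    simp only [List.mem_cons, List.not_mem_nil, or_false] at h1'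
    rcases h1' with h|h|h|h|h|h|h|h|h <;> subst h <;>
      first
        | (rw [isFactor_iff_infix]; decide)
        | (exact absurd h2 (by decide))
  have step1 : tildeStep u [true, false, true, true, false, false] := by
    rw [tildeStep_iff_mem]; decide
  have step2 : tildeStep [true, false, true, true, false, false] v := by
    rw [tildeStep_iff_mem]; decide
  have chain2 : tildeChain 2 u v :=
    ⟨[true, false, true, true, false, false], step1, [true, false, true, false, true, false], step2, rfl⟩
  have hdist : tildeDist u v = 2 := by
    have hmem : (2:ℕ) ∈ {d : ℕ | tildeChain d u v} := chain2
    apply le_antisymm (Nat.sInf_le hmem)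
    refine le_csInf ⟨2, hmem⟩ fun b hb => ?_
    · 
      match b with
      | 0 => have h0 : u = v := hb
             exact absurd h0 (by decide)
      | 1 =>
        exfalso
        obtain ⟨w, hs, hw⟩ := hb
        subst hw
        rw [tildeStep_iff_mem] at hs
        exact absurd hs (by decide)
      | (n+2) => omega
  refine ⟨hfreeU, hfreeV, hdist, key, ?_⟩
  intro hiso
  have := hiso u v (by decide) (by decide) hfreeU hfreeV
  rw [hdist] at this
  obtain ⟨w, hs1, hfw, w', hs2, hfw', hw'⟩ := this
  subst hw'
  exact hfw (key w hs1 hs2)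
end

section
/- Let f be a binary word of length n with a 2-tilde-error overlap of shift r realized by a tilde-transformation (R_i, R_j) with i < j (two replacements), i.e., suf_{n-r}(f) = R_j(R_i(pre_{n-r}(f))). Then the word α = pre_r(f) · R_i(f) is f-free. -/
/-!
Suppose `f` occurs in `α = pre_r(f) · R_i(f)` at offset `s ≤ r`, and put `t = r - s`. Reading the
occurrence against the `R_i(f)` part shows `f[k + t] = f[k]` except at `k = i`, where the bit
flips; so along every progression `x, x + t, x + 2t, …` the word is constant until the progression
passes `i` (and `t = 0` is impossible outright). If `t ∣ s`, then `t ∣ r` and the progression from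
`j > i` to `r + j` never meets `i`, contradicting the overlap's flip at `j`. Otherwise the
progression from `s + (i mod t)` to `r + i` misses `i`, and the `pre_r(f)` part of the occurrence
gives `f[s + (i mod t)] = f[i mod t] = f[i]`; this contradicts the overlap's flip at `i`.
-/

theorem getD_repl_s15 {w : List Bool} {i : ℕ} (hi : i < w.length) (q : ℕ) :
    (repl w i).getD q false = (w.getD q false ^^ decide (q = i)) := by
  unfold repl; grind

theorem getD_of_take_append_eq {α : Type*} {f g u v : List α} {r : ℕ}
    (huv : f.take r ++ g = u ++ f ++ v) (hr : r ≤ f.length) (hg : g.length = f.length) (d : α) :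
    u.length ≤ r ∧ (∀ k < r - u.length, f.getD (u.length + k) d = f.getD k d) ∧
      ∀ k, k + (r - u.length) < f.length → g.getD k d = f.getD (k + (r - u.length)) d := by
  have hlen := congrArg List.length huv
  simp only [List.length_append, List.length_take, hg, Nat.min_eq_left hr] at hlen
  have hocc : ∀ k < f.length, (f.take r ++ g).getD (u.length + k) d = f.getD k d := by
    intro k hk
    rw [huv, List.append_assoc, List.getD_append_right _ _ _ _ (by omega),
      Nat.add_sub_cancel_left, List.getD_append _ _ _ _ hk]
  refine ⟨by omega, fun k hk => ?_, fun k hk => ?_⟩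
  · rw [← hocc k (by omega), List.getD_append _ _ _ _ (by simp; omega)]
    grind
  · rw [← hocc _ hk, List.getD_append_right _ _ _ _ (by simp; omega)]
    congr 1
    simp only [List.length_take, Nat.min_eq_left hr]
    omega

def FlipPeriodic (F : ℕ → Bool) (N t i : ℕ) : Prop :=
  ∀ k, k + t < N → F (k + t) = (F k ^^ decide (k = i))

namespace FlipPeriodic

variable {F : ℕ → Bool} {N t i : ℕ}

theorem apply_add_mul (hF : FlipPeriodic F N t i) (x m : ℕ) (hN : x + m * t < N)
    (hi : ∀ l < m, x + l * t ≠ i) :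
    F (x + m * t) = F x := by
  induction m with
  | zero => simp
  | succ m ih =>
    rw [Nat.succ_mul, ← Nat.add_assoc] at hN ⊢
    rw [hF _ hN, ih (by omega) (fun l hl => hi l (by omega))]
    simp [hi m (by omega)]

theorem apply_add_of_dvd (hF : FlipPeriodic F N t i) {r j : ℕ} (htr : t ∣ r) (hij : i < j)
    (hN : r + j < N) :
    F (r + j) = F j := by
  obtain ⟨m, rfl⟩ := htr
  rw [Nat.add_comm, Nat.mul_comm]
  exact hF.apply_add_mul j m (by linarith) fun l _ => by
    have := Nat.le_add_right j (l * t); omega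

theorem apply_add_add_of_not_dvd (hF : FlipPeriodic F N t i) {s : ℕ} (ht : 0 < t)
    (hs : ¬ t ∣ s) (hprefix : ∀ k < t, F (s + k) = F k) (hN : s + t + i < N) :
    F (s + t + i) = F i := by
  set c := i % t
  set q := i / t
  have hi : c + q * t = i := by rw [Nat.mul_comm]; exact Nat.mod_add_div i t
  have hc : c < t := Nat.mod_lt i ht
  calc F (s + t + i) = F (s + c + (q + 1) * t) := by congr 1; rw [← hi]; ring
    _ = F (s + c) := hF.apply_add_mul _ _ (by rw [← hi] at hN; linarith) fun l _ h =>
        hs <| (Nat.dvd_add_left (Nat.dvd_mul_left t l)).mp ⟨q, by rw [← hi] at h; linarith⟩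
    _ = F c := hprefix c hc
    _ = F (c + q * t) := (hF.apply_add_mul _ _ (by rw [hi]; omega) fun l hl h => by
        rw [← hi] at h; have := Nat.mul_lt_mul_of_pos_right hl ht; omega).symm
    _ = F i := by rw [hi]

end FlipPeriodic

theorem stmt15_general (f : List Bool) (n r i j : ℕ) (hn : f.length = n)
    (hij : i < j) (hj : j < n - r)
    (hov : f.drop r = repl (repl (f.take (n - r)) i) j) :
    fFree f (f.take r ++ repl f i) := by
  rintro ⟨u, v, huv⟩
  set F : ℕ → Bool := fun x => f.getD x false
  have hoverlap : ∀ m < n - r, F (r + m) = (F m ^^ decide (m = i) ^^ decide (m = j)) := by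
    intro m hm
    calc F (r + m) = (f.drop r).getD m false := by grind
      _ = ((f.take (n - r)).getD m false ^^ decide (m = i) ^^ decide (m = j)) := by
        rw [hov, getD_repl_s15 (by simp [repl]; omega), getD_repl_s15 (by simp; omega)]
      _ = (F m ^^ decide (m = i) ^^ decide (m = j)) := by grind
  have hflip_i : F (r + i) = !F i := by simpa [hij.ne] using hoverlap i (by omega)
  have hflip_j : F (r + j) = !F j := by simpa [hij.ne'] using hoverlap j hj
  obtain ⟨hsr, hprefix, hshift⟩ := getD_of_take_append_eq huv (by omega) (by simp [repl]) false
  set s := u.length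
  set t := r - s
  have hperiod : FlipPeriodic F n t i := fun k hk =>
    (hshift k (by omega)).symm.trans (getD_repl_s15 (by omega) k)
  obtain ht | ht := t.eq_zero_or_pos
  · simpa [ht] using hperiod i (by omega)
  have hr : r = s + t := by omega
  by_cases hs : t ∣ s
  · have := hperiod.apply_add_of_dvd (r := r) (j := j)
      (by rw [hr]; exact Nat.dvd_add_self_right.mpr hs) hij (by omega)
    simp [hflip_j] at this
  · have := hperiod.apply_add_add_of_not_dvd ht hs hprefix (by omega)
    rw [← hr, hflip_i] at this
    simp at this

theorem stmt15 (f : List Bool) (n r i j : ℕ) (hn : f.length = n)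
    (hr0 : 0 < r) (hrn : r < n) (hij : i < j) (hj : j < n - r)
    (hov : f.drop r = repl (repl (f.take (n - r)) i) j) :
    fFree f (f.take r ++ repl f i) :=
  stmt15_general f n r i j hn hij hj hov
end

section
/- Let f be a binary word of length n with a 2-tilde-error overlap of shift r realized by a tilde-transformation (S_i, R_j) with i+1 < j, i.e., suf_{n-r}(f) = R_j(S_i(pre_{n-r}(f))). Then the word α = pre_r(f) · S_i(f) is f-free. -/
lemma getD_take' (l : List Bool) (m k : ℕ) (h : k < m) :
    (l.take m).getD k false = l.getD k false := by
  simp [List.getD_eq_getElem?_getD, List.getElem?_take, h]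

lemma getD_append_left' (l t : List Bool) (k : ℕ) (h : k < l.length) :
    (l ++ t).getD k false = l.getD k false := by
  simp [List.getD_eq_getElem?_getD, List.getElem?_append, h]

lemma getD_append_right' (l t : List Bool) (k : ℕ) (h : l.length ≤ k) :
    (l ++ t).getD k false = t.getD (k - l.length) false := by
  simp [List.getD_eq_getElem?_getD, List.getElem?_append_right h]

lemma getD_drop' (l : List Bool) (r k : ℕ) :
    (l.drop r).getD k false = l.getD (r+k) false := by
  simp [List.getD_eq_getElem?_getD, List.getElem?_drop]

lemma getD_set' (l : List Bool) (i k : ℕ) (b : Bool) (hk : k < l.length) :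
    (l.set i b).getD k false = if k = i then b else l.getD k false := by
  rcases eq_or_ne k i with rfl|h
  · simp [List.getD_eq_getElem?_getD, List.getElem?_set_self', hk]
  · simp [List.getD_eq_getElem?_getD, List.getElem?_set_ne h.symm, h]

lemma swap_getD (l : List Bool) (i k : ℕ) (hk : k < l.length) :
    (swap l i).getD k false =
      if k = i + 1 then l.getD i false
      else if k = i then l.getD (i+1) false else l.getD k false := by
  unfold swap
  rw [getD_set' _ _ _ _ (by simpa using hk), getD_set' _ _ _ _ hk]

lemma repl_getD (l : List Bool) (j k : ℕ) (hk : k < l.length) :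
    (repl l j).getD k false = if k = j then !(l.getD j false) else l.getD k false := by
  unfold repl
  rw [getD_set' _ _ _ _ hk]

theorem stmt16 (f : List Bool) (n r i j : ℕ) (hn : f.length = n)
    (hr0 : 0 < r) (hrn : r < n) (hij : i + 1 < j) (hj : j < n - r)
    (hsw : (f.take (n - r)).getD i false ≠ (f.take (n - r)).getD (i+1) false)
    (hov : f.drop r = repl (swap (f.take (n - r)) i) j) :
    fFree f (f.take r ++ swap f i) := by
  set F : ℕ → Bool := fun k => f.getD k false with hF
  have hswlen : (swap f i).length = n := by simp [swap, hn]
  have hjn : r + j < n := by omega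
  have hin : i + 1 < n - r := by omega
  have hW : ∀ k, k < n → (swap f i).getD k false =
      if k = i + 1 then F i else if k = i then F (i+1) else F k := by
    intro k hk
    rw [swap_getD f i k (by omega)]
  have hsw' : F i ≠ F (i+1) := by
    rwa [getD_take' _ _ _ (by omega), getD_take' _ _ _ (by omega)] at hsw
  have hstlen : (swap (f.take (n-r)) i).length = n - r := by
    simp only [swap, List.length_set, List.length_take, hn]; omega
  have hkval : ∀ k, k < n - r → (swap (f.take (n-r)) i).getD k false =
      if k = i + 1 then F i else if k = i then F (i+1) else F k := by
    intro k hk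
    rw [swap_getD _ _ _ (by rw [List.length_take, hn]; omega),
        getD_take' _ _ _ hin, getD_take' _ _ _ (by omega)]
    rcases eq_or_ne k (i+1) with rfl|h1
    · simp [hF, List.getD_eq_getElem?_getD]
    · rw [if_neg h1, if_neg h1]
      rcases eq_or_ne k i with rfl|h0
      · simp [hF, List.getD_eq_getElem?_getD]
      · rw [if_neg h0, if_neg h0, getD_take' _ _ _ hk]
  have hjval : (swap (f.take (n-r)) i).getD j false = F j := by
    rw [hkval j hj, if_neg (by omega), if_neg (by omega)]
  have hBt : ∀ k, k < n - r →
      F (r + k) = if k = j then !(F j)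
        else if k = i + 1 then F i else if k = i then F (i+1) else F k := by
    intro k hk
    have h1 : F (r + k) = (repl (swap (f.take (n-r)) i) j).getD k false := by
      rw [← hov]; exact (getD_drop' f r k).symm
    rw [repl_getD _ _ _ (by omega), hjval] at h1
    rw [h1]
    rcases eq_or_ne k j with h2|h2
    · rw [if_pos h2, if_pos h2]
    · rw [if_neg h2, if_neg h2, hkval k hk]
  rintro ⟨u, t, heq⟩
  set p := u.length with hpdef
  have hlen := congrArg List.length heq
  simp only [List.length_append, hswlen, List.length_take, hn,
    Nat.min_eq_left (le_of_lt hrn)] at hlen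
  have hp : p ≤ r := by omega
  have hocc : ∀ k, k < n → F k = (f.take r ++ swap f i).getD (p + k) false := by
    intro k hk
    rw [heq, getD_append_left' _ _ _ (by simp [hn]; omega),
        getD_append_right' _ _ _ (by omega), Nat.add_sub_cancel_left]
  have htlen : (f.take r).length = r := by rw [List.length_take, hn]; omega
  have hoccL : ∀ k, k < n → p + k < r → F k = F (p + k) := by
    intro k hk hkr
    rw [hocc k hk, getD_append_left' _ _ _ (by omega), getD_take' _ _ _ hkr]
  have hoccR : ∀ k, k < n → r ≤ p + k → F k = (swap f i).getD (p + k - r) false := by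
    intro k hk hkr
    rw [hocc k hk, getD_append_right' _ _ _ (by omega), htlen]
  rcases eq_or_lt_of_le hp with hpr|hplt
  · have := hoccR i (by omega) (by omega)
    rw [← hpr, Nat.add_sub_cancel_left, hW i (by omega)] at this
    rw [if_neg (by omega : ¬ i = i + 1), if_pos rfl] at this
    exact hsw' this
  · set s := r - p with hsdef
    have hs : 0 < s := by omega
    have hps : p + s = r := by omega
    have hA : ∀ m, m + s < n → F (m + s) = (swap f i).getD m false := by
      intro m hm
      have := hoccR (m + s) (by omega) (by omega)
      rwa [show p + (m + s) - r = m by omega] at this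
    have key1 : F (r + j) = !(F j) := by
      have := hBt j hj; rwa [if_pos rfl] at this
    have key2 : F (r + j) = F (j + p) := by
      have h2 := hA (j + p) (by omega)
      rw [show j + p + s = r + j by omega, hW (j+p) (by omega)] at h2
      rw [h2, if_neg (by omega : ¬ j + p = i + 1), if_neg (by omega : ¬ j + p = i)]
    have key3 : F (j + p) = F j := by
      by_cases hjs : j < s
      · have := hoccL j (by omega) (by omega)
        rw [show p + j = j + p by omega] at this
        exact this.symm
      · have h4 := hA (j - s) (by omega)
        rw [show j - s + s = j by omega] at h4
        have h5 := hBt (j - s) (by omega)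
        rw [if_neg (by omega : ¬ j - s = j),
            show r + (j - s) = j + p by omega] at h5
        rw [h5, h4, hW (j - s) (by omega)]
    rw [key3] at key2
    rw [key2] at key1
    simp at key1
end
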